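/- If G is a countable graph satisfying the extension property (for all finite disjoint vertex sets A and B there is a vertex adjacent to every vertex of A and to no vertex of B), and G' also satisfies the extension property, then G and G' are isomorphic. -/

import Mathlib

def ExtProp {V : Type*} (G : SimpleGraph V) : Prop :=
  ∀ A B : Finset V, Disjoint A B →
    ∃ v, v ∉ A ∧ v ∉ B ∧ (∀ a ∈ A, G.Adj v a) ∧ ∀ b ∈ B, ¬ G.Adj v b

def switch {V : Type*} (G : SimpleGraph V) (X : Set V) : SimpleGraph V where
  Adj u v := u ≠ v ∧ (G.Adj u v ↔ ((u ∈ X) ↔ (v ∈ X)))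
  symm := by
    refine ⟨fun u v h => ?_⟩
    refine ⟨h.1.symm, ?_⟩
    rw [G.adj_comm]
    tauto
  loopless := by exact ⟨fun v h => h.1 rfl⟩

/-!
Back and forth: viewing graphs as structures in the first-order language of graphs, the extension
property of `G'` lets every isomorphism from a finite induced subgraph of `G` into `G'` be extended
to any further vertex of `G`, and symmetrically. Mathlib's back-and-forth theorem
`equiv_between_cg` turns this into an isomorphism of the countable structures.
-/

open FirstOrder Language Structure Substructure

-- makes the empty partial isomorphism the `default` one, which starts the back and forth
instance : IsEmpty (Language.graph.Relations 0) := ⟨nofun⟩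

theorem FirstOrder.Language.Substructure.mem_closure_singleton_sup_iff_of_isRelational
    {L : Language} [L.IsRelational] {M : Type*} [L.Structure M] {S : L.Substructure M}
    {m x : M} : x ∈ closure L {m} ⊔ S ↔ x = m ∨ x ∈ S := by
  conv_lhs => rw [← closure_eq S, ← closure_insert, mem_closure_iff_of_isRelational]
  rfl

section ExtProp

variable {V V' : Type*} {G : SimpleGraph V} {G' : SimpleGraph V'}

theorem ExtProp.exists_adj_iff (h : ExtProp G) {s : Set V} (hs : s.Finite) (p : V → Prop) :
    ∃ v ∉ s, ∀ a ∈ s, G.Adj v a ↔ p a := by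
  classical
  obtain ⟨v, hvA, hvB, hA, hB⟩ :=
    h _ _ (Finset.disjoint_filter_filter_not hs.toFinset hs.toFinset p)
  refine ⟨v, fun hv => ?_, fun a ha => ⟨fun hva => ?_, fun hpa => hA a (by simp [ha, hpa])⟩⟩
  · by_cases hpv : p v
    · exact hvA (by simp [hv, hpv])
    · exact hvB (by simp [hv, hpv])
  · by_contra hpa
    exact hB a (by simp [ha, hpa]) hva

theorem ExtProp.isExtensionPair (h' : ExtProp G') :
    @IsExtensionPair Language.graph V V' G.structure G'.structure := by
  let := G.structure
  let := G'.structure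
  classical
  rw [isExtensionPair_iff_exists_embedding_closure_singleton_sup]
  intro S hS f m
  have : Finite S := hS.finite
  have hfS (a b : S) : G'.Adj (f a) (f b) ↔ G.Adj a b := f.map_rel adj ![a, b]
  -- the image of `m`: a fresh vertex seeing exactly the images of the neighbours of `m`
  obtain ⟨w, hw, hwf⟩ :=
    h'.exists_adj_iff (Set.finite_range f) (fun y => ∃ a, f a = y ∧ G.Adj m a)
  have hwS (a : S) : G'.Adj w (f a) ↔ G.Adj m a :=
    (hwf _ ⟨a, rfl⟩).trans ⟨fun ⟨b, hb, hmb⟩ => f.injective hb ▸ hmb, fun hma => ⟨a, rfl, hma⟩⟩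
  have hm (x : V) (hx : x ∈ closure Language.graph {m} ⊔ S) (hxS : x ∉ S) : x = m :=
    (mem_closure_singleton_sup_iff_of_isRelational.mp hx).resolve_right hxS
  let g (x : (closure Language.graph {m} ⊔ S : Language.graph.Substructure V)) : V' :=
    if hx : (x : V) ∈ S then f ⟨x, hx⟩ else w
  have hg_adj (x y) : G'.Adj (g x) (g y) ↔ G.Adj x y := by
    obtain ⟨x, hx⟩ := x
    obtain ⟨y, hy⟩ := y
    by_cases hxS : x ∈ S <;> by_cases hyS : y ∈ S <;>
      simp only [g, hxS, hyS, dif_pos, dif_neg, not_false_eq_true]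
    · exact hfS _ _
    · rw [hm y hy hyS, G'.adj_comm, G.adj_comm]
      exact hwS _
    · rw [hm x hx hxS]
      exact hwS _
    · simp [hm x hx hxS, hm y hy hyS]
  have hg_inj : Function.Injective g := by
    rintro ⟨x, hx⟩ ⟨y, hy⟩ hxy
    by_cases hxS : x ∈ S <;> by_cases hyS : y ∈ S <;>
      simp only [g, hxS, hyS, dif_pos, dif_neg, not_false_eq_true] at hxy
    · simpa using f.injective hxy
    · exact absurd ⟨_, hxy⟩ hw
    · exact absurd ⟨_, hxy.symm⟩ hw
    · simp [hm x hx hxS, hm y hy hyS]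
  refine ⟨⟨⟨g, hg_inj⟩, nofun, ?_⟩, ?_⟩
  · rintro _ ⟨⟩ x
    exact hg_adj (x 0) (x 1)
  · ext ⟨x, hx⟩
    change f ⟨x, hx⟩ = g _
    simp [g, hx]

end ExtProp

theorem rado_unique {V V' : Type*} [Countable V] [Countable V']
    (G : SimpleGraph V) (G' : SimpleGraph V')
    (h : ExtProp G) (h' : ExtProp G') : Nonempty (G ≃g G') := by
  let := G.structure
  let := G'.structure
  obtain ⟨f, -⟩ := equiv_between_cg cg_of_countable cg_of_countable default
    h'.isExtensionPair h.isExtensionPair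
  exact ⟨⟨f.toEquiv, fun {a b} => f.map_rel adj ![a, b]⟩⟩
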